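/- Let u₁, …, u_p be independent real-valued random variables, each with mean zero and taking values in [−1, 1] almost surely. Let a ∈ ℝ^n, b ∈ ℝ, d ∈ ℝ^p, z ∈ ℝ^n, V ∈ ℝ^{n×p}, and ε ∈ (0, 1). If there exists y ∈ ℝ^p such that aᵀz + Γ‖Vᵀa − d − y‖_∞ + ‖y‖₁ ≤ b holds with Γ = √(2 ln(1/ε))·√p, then ℙ[aᵀ(z + V u) ≤ b + dᵀu] ≥ 1 − ε. -/

import Mathlib

open Matrix MeasureTheory ProbabilityTheory Real
open scoped NNReal

/-!
Write `c = Vᵀa − d − y`. Whenever every `|u_k| ≤ 1`, the constraint `aᵀ(z + Vu) ≤ b + dᵀu`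
follows from the robust inequality as soon as `cᵀu ≤ Γ‖c‖_∞`, since `yᵀu ≤ ‖y‖₁`. By Hoeffding's
lemma and independence, `cᵀu` is sub-Gaussian with variance proxy `∑ c_k² ≤ p‖c‖_∞²`, so the
Chernoff bound gives `ℙ[cᵀu > Γ‖c‖_∞] ≤ exp(−Γ²/(2p)) = ε`.
-/

namespace ProbabilityTheory.HasSubgaussianMGF

variable {Ω : Type*} [MeasurableSpace Ω] {μ : Measure Ω} [IsFiniteMeasure μ] {X : Ω → ℝ}
  {c : ℝ≥0} {ε : ℝ}

lemma measureReal_sqrt_lt_le (h : HasSubgaussianMGF X c μ) (hε0 : 0 < ε) (hε1 : ε ≤ 1) :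
    μ.real {ω | √(2 * c * log (1 / ε)) < X ω} ≤ ε := by
  rcases eq_zero_or_pos c with rfl | hc
  · have hnull : μ {ω | 0 < X ω} = 0 :=
      measure_mono_null (fun ω (hω : 0 < X ω) => hω.ne') h.ae_eq_zero_of_hasSubgaussianMGF_zero
    simp [measureReal_def, hnull, hε0.le]
  have hlog : 0 ≤ log (1 / ε) := log_nonneg (one_le_one_div hε0 hε1)
  calc μ.real {ω | √(2 * c * log (1 / ε)) < X ω}
      ≤ μ.real {ω | √(2 * c * log (1 / ε)) ≤ X ω} :=
        measureReal_mono fun ω (hω : _ < X ω) => hω.le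
    _ ≤ exp (-√(2 * c * log (1 / ε)) ^ 2 / (2 * c)) := h.measure_ge_le (sqrt_nonneg _)
    _ = ε := by
        rw [sq_sqrt (by positivity), neg_div, mul_div_cancel_left₀ _ (by positivity),
          one_div, log_inv, neg_neg, exp_log hε0]

end ProbabilityTheory.HasSubgaussianMGF

lemma hasSubgaussianMGF_sum_mul_of_mem_Icc {ι Ω : Type*} [Fintype ι] [MeasurableSpace Ω]
    {P : Measure Ω} [IsProbabilityMeasure P] {u : ι → Ω → ℝ}
    (hmeas : ∀ k, AEMeasurable (u k) P) (hindep : iIndepFun u P)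
    (hmean : ∀ k, ∫ ω, u k ω ∂P = 0) (hbdd : ∀ k, ∀ᵐ ω ∂P, u k ω ∈ Set.Icc (-1 : ℝ) 1)
    (c : ι → ℝ) :
    HasSubgaussianMGF (fun ω => ∑ k, c k * u k ω) (∑ k, ‖c k‖₊ ^ 2) P := by
  refine HasSubgaussianMGF.sum_of_iIndepFun
    (hindep.comp (fun k x => c k * x) fun k => measurable_const_mul _) fun k _ => ?_
  have hoeffding := (hasSubgaussianMGF_of_mem_Icc_of_integral_eq_zero (hmeas k) (hbdd k)
    (hmean k)).const_mul (c k)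
  convert hoeffding using 1
  · rfl
  · ext
    norm_num
    exact (mul_one _).symm

lemma sum_norm_sq_le_card_mul_norm_sq {ι : Type*} [Fintype ι] {E : ι → Type*}
    [∀ k, SeminormedAddCommGroup (E k)] (c : ∀ k, E k) :
    ∑ k, ‖c k‖ ^ 2 ≤ Fintype.card ι * ‖c‖ ^ 2 := by
  calc ∑ k, ‖c k‖ ^ 2 ≤ ∑ _k : ι, ‖c‖ ^ 2 :=
        Finset.sum_le_sum fun k _ => by gcongr; exact norm_le_pi_norm c k
    _ = Fintype.card ι * ‖c‖ ^ 2 := by simp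

lemma sqrt_two_mul_sum_sq_mul_le {ι : Type*} [Fintype ι] (c : ι → ℝ) {L : ℝ} (hL : 0 ≤ L) :
    √(2 * (∑ k, ‖c k‖ ^ 2) * L) ≤ √(2 * L) * √(Fintype.card ι) * ‖c‖ := by
  have hσ := sum_norm_sq_le_card_mul_norm_sq c
  calc √(2 * (∑ k, ‖c k‖ ^ 2) * L) ≤ √(2 * L * Fintype.card ι * ‖c‖ ^ 2) :=
        sqrt_le_sqrt (by nlinarith)
    _ = √(2 * L) * √(Fintype.card ι) * ‖c‖ := by
        rw [sqrt_mul (by positivity), sqrt_mul (by positivity), sqrt_sq (norm_nonneg _)]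

lemma dotProduct_le_sum_abs_of_mem_Icc {ι : Type*} [Fintype ι] (y w : ι → ℝ)
    (hw : ∀ k, w k ∈ Set.Icc (-1 : ℝ) 1) : y ⬝ᵥ w ≤ ∑ k, |y k| :=
  Finset.sum_le_sum fun k _ => by
    calc y k * w k ≤ |y k * w k| := le_abs_self _
      _ = |y k| * |w k| := abs_mul _ _
      _ ≤ |y k| * 1 := by gcongr; exact abs_le.2 (hw k)
      _ = |y k| := mul_one _

lemma dotProduct_add_mulVec_le_of_dotProduct_le {m ι : Type*} [Fintype m] [Fintype ι]
    (a z : m → ℝ) (V : Matrix m ι ℝ) (b Γ : ℝ) (d y w : ι → ℝ)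
    (hw : ∀ k, w k ∈ Set.Icc (-1 : ℝ) 1)
    (hrc : a ⬝ᵥ z + Γ * ‖Vᵀ *ᵥ a - d - y‖ + ∑ k, |y k| ≤ b)
    (hdev : (Vᵀ *ᵥ a - d - y) ⬝ᵥ w ≤ Γ * ‖Vᵀ *ᵥ a - d - y‖) :
    a ⬝ᵥ (z + V *ᵥ w) ≤ b + d ⬝ᵥ w := by
  have hsplit : a ⬝ᵥ (z + V *ᵥ w) =
      a ⬝ᵥ z + (Vᵀ *ᵥ a - d - y) ⬝ᵥ w + d ⬝ᵥ w + y ⬝ᵥ w := by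
    rw [dotProduct_add, dotProduct_mulVec, ← mulVec_transpose, sub_dotProduct, sub_dotProduct,
      dotProduct_comm]
    ring
  linarith [dotProduct_le_sum_abs_of_mem_Icc y w hw]

theorem budget_rc_epsilon_guarantee_general {p n : ℕ}
    {Ω : Type*} [MeasurableSpace Ω] (P : Measure Ω) [IsProbabilityMeasure P]
    (u : Fin p → Ω → ℝ)
    (hmeas : ∀ k, Measurable (u k))
    (hindep : iIndepFun u P)
    (hmean : ∀ k, ∫ ω, u k ω ∂P = 0)
    (hbdd : ∀ k, ∀ᵐ ω ∂P, u k ω ∈ Set.Icc (-1 : ℝ) 1)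
    (a : Fin n → ℝ) (b : ℝ) (d : Fin p → ℝ)
    (z : Fin n → ℝ) (V : Matrix (Fin n) (Fin p) ℝ)
    (ε : ℝ) (hε0 : 0 < ε) (hε1 : ε < 1)
    (y : Fin p → ℝ)
    (hrc : a ⬝ᵥ z + (Real.sqrt (2 * Real.log (1 / ε)) * Real.sqrt p) *
        ‖Vᵀ *ᵥ a - d - y‖ + ∑ k, |y k| ≤ b) :
    P {ω | a ⬝ᵥ (z + V *ᵥ fun k => u k ω) ≤ b + d ⬝ᵥ fun k => u k ω} ≥
      ENNReal.ofReal (1 - ε) := by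
  set c := Vᵀ *ᵥ a - d - y
  set Γ := Real.sqrt (2 * Real.log (1 / ε)) * Real.sqrt p
  set bad := {ω | Γ * ‖c‖ < ∑ k, c k * u k ω}
  have hsubG := hasSubgaussianMGF_sum_mul_of_mem_Icc (fun k => (hmeas k).aemeasurable) hindep
    hmean hbdd c
  have hthreshold : √(2 * ↑(∑ k, ‖c k‖₊ ^ 2) * log (1 / ε)) ≤ Γ * ‖c‖ := by
    push_cast
    simpa only [Fintype.card_fin] using
      sqrt_two_mul_sum_sq_mul_le c (log_nonneg (one_le_one_div hε0 hε1.le))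
  have hbad : P bad ≤ ENNReal.ofReal ε := by
    rw [ENNReal.le_ofReal_iff_toReal_le (measure_ne_top _ _) hε0.le]
    refine le_trans (measureReal_mono fun ω (hω : _ < _) => hthreshold.trans_lt hω) ?_
    exact hsubG.measureReal_sqrt_lt_le hε0 hε1.le
  have hgood : ∀ᵐ ω ∂P, ω ∉ bad →
      ω ∈ {ω | a ⬝ᵥ (z + V *ᵥ fun k => u k ω) ≤ b + d ⬝ᵥ fun k => u k ω} := by
    filter_upwards [ae_all_iff.2 hbdd] with ω hω hnot
    exact dotProduct_add_mulVec_le_of_dotProduct_le a z V b Γ d y _ hω hrc (not_lt.1 hnot)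
  calc ENNReal.ofReal (1 - ε) = 1 - ENNReal.ofReal ε := by
        rw [ENNReal.ofReal_sub _ hε0.le, ENNReal.ofReal_one]
    _ ≤ 1 - P bad := tsub_le_tsub_left hbad 1
    _ = P badᶜ := (prob_compl_eq_one_sub (measurableSet_lt measurable_const (by fun_prop))).symm
    _ ≤ _ := measure_mono_ae hgood

/-- **Calibrated budget robust counterpart.** If `u₁,…,u_p` are independent, mean-zero,
`[−1,1]`-valued random variables and there is `y` with
`aᵀz + Γ‖Vᵀa − d − y‖_∞ + ‖y‖₁ ≤ b` for `Γ = √(2 ln(1/ε))·√p`, then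
`ℙ[aᵀ(z + Vu) ≤ b + dᵀu] ≥ 1 − ε`. -/
theorem budget_rc_epsilon_guarantee {p n : ℕ} (hp : 0 < p)
    {Ω : Type*} [MeasurableSpace Ω] (P : Measure Ω) [IsProbabilityMeasure P]
    (u : Fin p → Ω → ℝ)
    (hmeas : ∀ k, Measurable (u k))
    (hindep : iIndepFun u P)
    (hmean : ∀ k, ∫ ω, u k ω ∂P = 0)
    (hbdd : ∀ k, ∀ᵐ ω ∂P, u k ω ∈ Set.Icc (-1 : ℝ) 1)
    (a : Fin n → ℝ) (b : ℝ) (d : Fin p → ℝ)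
    (z : Fin n → ℝ) (V : Matrix (Fin n) (Fin p) ℝ)
    (ε : ℝ) (hε0 : 0 < ε) (hε1 : ε < 1)
    (y : Fin p → ℝ)
    (hrc : a ⬝ᵥ z + (Real.sqrt (2 * Real.log (1 / ε)) * Real.sqrt p) *
        ‖Vᵀ *ᵥ a - d - y‖ + ∑ k, |y k| ≤ b) :
    P {ω | a ⬝ᵥ (z + V *ᵥ fun k => u k ω) ≤ b + d ⬝ᵥ fun k => u k ω} ≥
      ENNReal.ofReal (1 - ε) :=
  budget_rc_epsilon_guarantee_general P u hmeas hindep hmean hbdd a b d z V ε hε0 hε1 y hrc
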